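/- If X is a maximal critical independent set of G (maximal under inclusion among critical independent sets), then diadem(G) ⊆ (X ∪ N(X)) − N(ker(G)). -/
import Mathlib


open Classical Finset

/-- Neighborhood of a set of vertices: all vertices adjacent to some vertex of `X`. -/
noncomputable def nbhd {V : Type*} (G : SimpleGraph V) [Fintype V] (X : Finset V) : Finset V :=
  Finset.univ.filter (fun v => ∃ x ∈ X, G.Adj x v)

/-- The difference `d(X) = |X| - |N(X)|`. -/
noncomputable def gdiff {V : Type*} (G : SimpleGraph V) [Fintype V] (X : Finset V) : ℤ :=
  (X.card : ℤ) - ((nbhd G X).card : ℤ)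

/-- `X` is an independent set of `G`. -/
def IsIndep {V : Type*} (G : SimpleGraph V) (X : Finset V) : Prop :=
  ∀ x ∈ X, ∀ y ∈ X, ¬ G.Adj x y

/-- The critical difference `d_c(G) = max { d(X) : X ⊆ V(G) }`. -/
noncomputable def critDiff {V : Type*} (G : SimpleGraph V) [Fintype V] : ℤ :=
  Finset.univ.powerset.sup' ⟨∅, Finset.empty_mem_powerset _⟩ (gdiff G)

/-- `X` is a critical set of `G`. -/
noncomputable def IsCritical {V : Type*} (G : SimpleGraph V) [Fintype V] (X : Finset V) : Prop :=
  gdiff G X = critDiff G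

/-- `ker G` : the intersection of all critical sets of `G`. -/
noncomputable def kerG {V : Type*} (G : SimpleGraph V) [Fintype V] : Finset V :=
  Finset.univ.filter (fun v => ∀ X : Finset V, IsCritical G X → v ∈ X)

/-- `diadem G` : the union of all critical independent sets of `G`. -/
noncomputable def diademG {V : Type*} (G : SimpleGraph V) [Fintype V] : Finset V :=
  Finset.univ.filter (fun v => ∃ X : Finset V, IsCritical G X ∧ IsIndep G X ∧ v ∈ X)

/-- The independence number `α(G)`. -/
noncomputable def alphaG {V : Type*} (G : SimpleGraph V) [Fintype V] : ℕ :=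
  (Finset.univ.powerset.filter (IsIndep G)).sup Finset.card

/-- `core G` : the intersection of all maximum independent sets of `G`. -/
noncomputable def coreG {V : Type*} (G : SimpleGraph V) [Fintype V] : Finset V :=
  Finset.univ.filter (fun v => ∀ I : Finset V, IsIndep G I → I.card = alphaG G → v ∈ I)

/-- `M` is a matching of `G`, given as a finite set of pairwise disjoint edges of `G`. -/
def IsMatchingF {V : Type*} (G : SimpleGraph V) (M : Finset (Sym2 V)) : Prop :=
  (↑M : Set (Sym2 V)) ⊆ G.edgeSet ∧
    ∀ e₁ ∈ M, ∀ e₂ ∈ M, e₁ ≠ e₂ → ∀ v : V, v ∈ e₁ → v ∉ e₂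

/-- The matching number `μ(G)`. -/
noncomputable def matchNum {V : Type*} (G : SimpleGraph V) [Fintype V] : ℕ :=
  ((Finset.univ : Finset (Finset (Sym2 V))).filter (IsMatchingF G)).sup Finset.card

/-- There is a matching from `A` into `B`: an injection of `A` into `B` along edges of `G`. -/
def MatchingFromInto {V : Type*} (G : SimpleGraph V) (A B : Finset V) : Prop :=
  ∃ f : V → V, Set.InjOn f ↑A ∧ ∀ a ∈ A, f a ∈ B ∧ G.Adj a (f a)

/-- The auxiliary bipartite graph `H_X` on vertex set `X ∪ N(X) ∪ {v, w}`, where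
`v = Sum.inr false` and `w = Sum.inr true`.  Its edges are the edges of `G` between
`X` and `N(X)`, the edge `vw`, and all edges from `v` to `N(X)`. -/
noncomputable def HX {V : Type*} (G : SimpleGraph V) [Fintype V] (X : Finset V) :
    SimpleGraph ({a : V // a ∈ X ∪ nbhd G X} ⊕ Bool) :=
  SimpleGraph.fromRel (fun p q =>
    match p, q with
    | Sum.inl a, Sum.inl b => a.1 ∈ X ∧ b.1 ∈ nbhd G X ∧ G.Adj a.1 b.1
    | Sum.inr false, Sum.inr true => True
    | Sum.inr false, Sum.inl b => b.1 ∈ nbhd G X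
    | _, _ => False)

/-- The copy of `X` inside the vertex set of `H_X`. -/
noncomputable def Xlift {V : Type*} (G : SimpleGraph V) [Fintype V] (X : Finset V) :
    Finset ({a : V // a ∈ X ∪ nbhd G X} ⊕ Bool) :=
  Finset.univ.filter (fun p => ∃ a : {a : V // a ∈ X ∪ nbhd G X}, p = Sum.inl a ∧ a.1 ∈ X)

/-- Edmonds–Gallai set `D`: vertices missed by some maximum matching. -/
noncomputable def gallaiD {V : Type*} (G : SimpleGraph V) [Fintype V] : Finset V :=
  Finset.univ.filter (fun v => ∃ M : Finset (Sym2 V),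
    IsMatchingF G M ∧ M.card = matchNum G ∧ ∀ e ∈ M, v ∉ e)

/-- Edmonds–Gallai set `A = N(D) - D`. -/
noncomputable def gallaiA {V : Type*} (G : SimpleGraph V) [Fintype V] : Finset V :=
  nbhd G (gallaiD G) \ gallaiD G

/-- Edmonds–Gallai set `C = V - A - D`. -/
noncomputable def gallaiC {V : Type*} (G : SimpleGraph V) [Fintype V] : Finset V :=
  (Finset.univ \ gallaiD G) \ gallaiA G

/-- The vertices of the singleton components of `G[D]`. -/
noncomputable def singlesD {V : Type*} (G : SimpleGraph V) [Fintype V] : Finset V :=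
  (gallaiD G).filter (fun v => ∀ w ∈ gallaiD G, ¬ G.Adj v w)

section Aux

variable {V : Type*} (G : SimpleGraph V) [Fintype V] [DecidableEq V]

lemma mem_nbhd' {X : Finset V} {v : V} : v ∈ nbhd G X ↔ ∃ x ∈ X, G.Adj x v := by
  simp [nbhd]

lemma nbhd_mono {A B : Finset V} (h : A ⊆ B) : nbhd G A ⊆ nbhd G B := by
  intro v hv
  rw [mem_nbhd'] at hv ⊢
  obtain ⟨x, hx, hadj⟩ := hv
  exact ⟨x, h hx, hadj⟩

lemma nbhd_union (A B : Finset V) : nbhd G (A ∪ B) = nbhd G A ∪ nbhd G B := by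
  ext v
  simp only [mem_nbhd', Finset.mem_union]
  constructor
  · rintro ⟨x, hx | hx, hadj⟩
    · exact Or.inl ⟨x, hx, hadj⟩
    · exact Or.inr ⟨x, hx, hadj⟩
  · rintro (⟨x, hx, hadj⟩ | ⟨x, hx, hadj⟩)
    · exact ⟨x, Or.inl hx, hadj⟩
    · exact ⟨x, Or.inr hx, hadj⟩

lemma gdiff_le_critDiff (Z : Finset V) : gdiff G Z ≤ critDiff G :=
  Finset.le_sup' _ (Finset.mem_powerset.2 (Finset.subset_univ Z))

lemma union_critical {A B : Finset V} (hA : IsCritical G A) (hB : IsCritical G B) :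
    IsCritical G (A ∪ B) := by
  have h1 : ((A ∪ B).card : ℤ) + ((A ∩ B).card : ℤ) = (A.card : ℤ) + (B.card : ℤ) := by
    exact_mod_cast Finset.card_union_add_card_inter A B
  have h2 : ((nbhd G A ∪ nbhd G B).card : ℤ) + ((nbhd G A ∩ nbhd G B).card : ℤ)
      = ((nbhd G A).card : ℤ) + ((nbhd G B).card : ℤ) := by
    exact_mod_cast Finset.card_union_add_card_inter (nbhd G A) (nbhd G B)
  have h3 : nbhd G (A ∩ B) ⊆ nbhd G A ∩ nbhd G B := by
    intro v hv
    rw [Finset.mem_inter]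
    exact ⟨nbhd_mono G Finset.inter_subset_left hv,
      nbhd_mono G Finset.inter_subset_right hv⟩
  have h3' : ((nbhd G (A ∩ B)).card : ℤ) ≤ ((nbhd G A ∩ nbhd G B).card : ℤ) := by
    exact_mod_cast Finset.card_le_card h3
  have hsum : gdiff G A + gdiff G B ≤ gdiff G (A ∪ B) + gdiff G (A ∩ B) := by
    unfold gdiff
    rw [nbhd_union]
    linarith
  have hu := gdiff_le_critDiff G (A ∪ B)
  have hi := gdiff_le_critDiff G (A ∩ B)
  unfold IsCritical at hA hB ⊢
  linarith

lemma shed_subset (Z : Finset V) : nbhd G (Z \ nbhd G Z) ⊆ nbhd G Z \ Z := by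
  intro v hv
  rw [mem_nbhd'] at hv
  obtain ⟨u, hu, hadj⟩ := hv
  rw [Finset.mem_sdiff] at hu ⊢
  refine ⟨(mem_nbhd' G).2 ⟨u, hu.1, hadj⟩, fun hvZ => ?_⟩
  exact hu.2 ((mem_nbhd' G).2 ⟨v, hvZ, hadj.symm⟩)

lemma gdiff_shed (Z : Finset V) : gdiff G Z ≤ gdiff G (Z \ nbhd G Z) := by
  have h1 : ((Z \ nbhd G Z).card : ℤ) + ((Z ∩ nbhd G Z).card : ℤ) = (Z.card : ℤ) := by
    exact_mod_cast Finset.card_sdiff_add_card_inter Z (nbhd G Z)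
  have h2 : ((nbhd G (Z \ nbhd G Z)).card : ℤ) ≤ ((nbhd G Z \ Z).card : ℤ) := by
    exact_mod_cast Finset.card_le_card (shed_subset G Z)
  have h3 : ((nbhd G Z \ Z).card : ℤ) + ((nbhd G Z ∩ Z).card : ℤ) = ((nbhd G Z).card : ℤ) := by
    exact_mod_cast Finset.card_sdiff_add_card_inter (nbhd G Z) Z
  have h4 : ((nbhd G Z ∩ Z).card : ℤ) = ((Z ∩ nbhd G Z).card : ℤ) := by
    rw [Finset.inter_comm]
  unfold gdiff
  linarith

lemma indep_shed (Z : Finset V) : IsIndep G (Z \ nbhd G Z) := by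
  intro x hx y hy hadj
  rw [Finset.mem_sdiff] at hx hy
  exact hy.2 ((mem_nbhd' G).2 ⟨x, hx.1, hadj⟩)

end Aux

/-- if `X` is a maximal critical independent set then
`diadem G ⊆ (X ∪ N(X)) - N(ker G)`. -/
theorem stmt11 {V : Type*} (G : SimpleGraph V) [Fintype V] [DecidableEq V] [DecidableRel G.Adj]
    (X : Finset V) (hXc : IsCritical G X) (hXi : IsIndep G X)
    (hmax : ∀ Y : Finset V, IsCritical G Y → IsIndep G Y → X ⊆ Y → Y = X) :
    diademG G ⊆ (X ∪ nbhd G X) \ nbhd G (kerG G) := by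
  intro v hv
  simp only [diademG, Finset.mem_filter, Finset.mem_univ, true_and] at hv
  obtain ⟨W, hWc, hWi, hvW⟩ := hv
  rw [Finset.mem_sdiff]
  constructor
  · -- v ∈ X ∪ nbhd G X
    set U : Finset V := X ∪ W with hU
    have hUc : IsCritical G U := union_critical G hXc hWc
    set Y : Finset V := U \ nbhd G U with hY
    have hYc : IsCritical G Y := by
      unfold IsCritical at hUc ⊢
      exact le_antisymm (gdiff_le_critDiff G Y) (hUc ▸ gdiff_shed G U)
    have hYi : IsIndep G Y := indep_shed G U
    have hXYi : IsIndep G (X ∪ Y) := by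
      intro a ha b hb hadj
      rw [Finset.mem_union] at ha hb
      rcases ha with ha | ha <;> rcases hb with hb | hb
      · exact hXi a ha b hb hadj
      · rw [hY, Finset.mem_sdiff] at hb
        exact hb.2 (nbhd_mono G Finset.subset_union_left ((mem_nbhd' G).2 ⟨a, ha, hadj⟩))
      · rw [hY, Finset.mem_sdiff] at ha
        exact ha.2 (nbhd_mono G Finset.subset_union_left ((mem_nbhd' G).2 ⟨b, hb, hadj.symm⟩))
      · exact hYi a ha b hb hadj
    have hXY : X ∪ Y = X :=
      hmax (X ∪ Y) (union_critical G hXc hYc) hXYi Finset.subset_union_left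
    have hYX : Y ⊆ X := by
      intro y hy
      rw [← hXY]
      exact Finset.mem_union_right _ hy
    by_cases hvN : v ∈ nbhd G U
    · rw [hU, nbhd_union, Finset.mem_union] at hvN
      rcases hvN with hvN | hvN
      · exact Finset.mem_union_right _ hvN
      · obtain ⟨w, hw, hadj⟩ := (mem_nbhd' G).1 hvN
        exact absurd hadj (hWi w hw v hvW)
    · have hvY : v ∈ Y := by
        rw [hY, Finset.mem_sdiff]
        exact ⟨Finset.mem_union_right _ hvW, hvN⟩
      exact Finset.mem_union_left _ (hYX hvY)
  · -- v ∉ nbhd G (kerG G)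
    intro h
    obtain ⟨k, hk, hadj⟩ := (mem_nbhd' G).1 h
    simp only [kerG, Finset.mem_filter, Finset.mem_univ, true_and] at hk
    exact hWi k (hk W hWc) v hvW hadj
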